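/- Let A and E be n×n real symmetric matrices and set Ã = A + E. Let λ₁ ≤ λ₂ ≤ ⋯ ≤ λₙ be the eigenvalues of A with a corresponding orthonormal basis of eigenvectors u₁, …, uₙ, and let λ̃₁ ≤ ⋯ ≤ λ̃ₙ be the eigenvalues of Ã with orthonormal eigenvectors ũ₁, …, ũₙ. Fix 1 ≤ ρ < n and assume λ̃_{ρ+1} > λ_ρ. Let U₁ = [u₁ ⋯ u_ρ] and Ũ₂ = [ũ_{ρ+1} ⋯ ũₙ]. Then ‖Ũ₂ᵀU₁‖₂ ≤ σ_max(E) / (λ̃_{ρ+1} − λ_ρ), where σ_max(E) is the largest singular value of E. -/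

import Mathlib

/-!
Since `A U₁ = U₁ Λ₁` and `(A + E) Ũ₂ = Ũ₂ Λ̃₂`, the matrix `W = Ũ₂ᵀ U₁` solves the Sylvester
equation `Λ̃₂ W - W Λ₁ = Ũ₂ᵀ E U₁`. Test it against a top singular pair of `W`
(`W v = ‖W‖ u`, `Wᵀ u = ‖W‖ v`, from a top eigenvector of `Wᵀ W`): the left side gives
`‖W‖ (uᵀ Λ̃₂ u - vᵀ Λ₁ v) ≥ ‖W‖ (λ̃_{ρ+1} - λ_ρ)`, while the right side is at most `‖E‖`
because `Ũ₂` and `U₁` have orthonormal columns. `specNorm` coincides with Mathlib's L2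
operator norm of matrices.
-/

open Matrix

/-- The spectral norm (operator 2-norm, largest singular value) of a real matrix:
the supremum of the Euclidean norm of `M.mulVec x` over the Euclidean unit ball. -/
noncomputable def specNorm {m n : ℕ} (M : Matrix (Fin m) (Fin n) ℝ) : ℝ :=
  sSup {r : ℝ | ∃ x : Fin n → ℝ, (∑ i, (x i) ^ 2) ≤ 1 ∧
    r = Real.sqrt (∑ j, (M.mulVec x j) ^ 2)}

open scoped Matrix.Norms.L2Operator
open WithLp EuclideanSpace

namespace EuclideanSpace

variable {ι : Type*} [Fintype ι]

theorem norm_toLp_sq (x : ι → ℝ) : ‖toLp 2 x‖ ^ 2 = x ⬝ᵥ x := by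
  rw [← real_inner_self_eq_norm_sq, inner_toLp_toLp, star_trivial]

theorem norm_toLp_eq_sqrt (x : ι → ℝ) : ‖toLp 2 x‖ = √(x ⬝ᵥ x) := by
  rw [← norm_toLp_sq, Real.sqrt_sq (norm_nonneg _)]

end EuclideanSpace

namespace Matrix

section Eigenvectors

variable {R n p : Type*} [CommRing R] [Fintype n] [DecidableEq p]

theorem mul_eq_mul_diagonal_of_mulVec_eq_smul [Fintype p] {A : Matrix n n R} {P : Matrix n p R}
    {v : p → n → R} {d : p → R} (hP : ∀ x j, P x j = v j x) (hv : ∀ j, A *ᵥ v j = d j • v j) :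
    A * P = P * diagonal d := by
  ext x j
  have := congrFun (hv j) x
  simp only [mulVec, dotProduct, Pi.smul_apply, smul_eq_mul] at this
  rw [mul_diagonal, mul_apply]
  simp only [hP, this, mul_comm]

theorem transpose_mul_self_eq_one_of_orthonormal {P : Matrix n p R} {v : p → n → R}
    (hP : ∀ x j, P x j = v j x) (hv : ∀ i j, ∑ x, v i x * v j x = if i = j then 1 else 0) :
    Pᵀ * P = 1 := by
  ext i j
  simp only [mul_apply, transpose_apply, hP, hv, one_apply]

theorem diagonal_mul_sub_mul_diagonal_eq {q : Type*} [Fintype p] [Fintype q] [DecidableEq q]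
    {A B : Matrix n n R} {P : Matrix n p R} {Q : Matrix n q R} {d : p → R} {e : q → R}
    (hB : B.IsSymm) (hP : A * P = P * diagonal d) (hQ : B * Q = Q * diagonal e) :
    diagonal e * (Qᵀ * P) - Qᵀ * P * diagonal d = Qᵀ * (B - A) * P := by
  have hQB : Qᵀ * B = diagonal e * Qᵀ := by
    rw [← hB.eq, ← transpose_mul, hQ, transpose_mul, diagonal_transpose]
  rw [Matrix.mul_sub, Matrix.sub_mul, hQB, Matrix.mul_assoc Qᵀ A, hP]
  simp only [Matrix.mul_assoc]

end Eigenvectors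

variable {ι κ : Type*} [Fintype ι] [Fintype κ]

theorem dotProduct_diagonal_mulVec_self [DecidableEq ι] (a x : ι → ℝ) :
    x ⬝ᵥ diagonal a *ᵥ x = ∑ i, a i * x i ^ 2 := by
  simp only [dotProduct, mulVec_diagonal]
  exact Finset.sum_congr rfl fun i _ ↦ by ring

theorem IsHermitian.exists_eigenvector_dotProduct_mulVec_le [DecidableEq ι] [Nonempty ι]
    {M : Matrix ι ι ℝ} (hM : M.IsHermitian) :
    ∃ (μ : ℝ) (v : ι → ℝ), v ⬝ᵥ v = 1 ∧ M *ᵥ v = μ • v ∧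
      ∀ x, x ⬝ᵥ M *ᵥ x ≤ μ * (x ⬝ᵥ x) := by
  obtain ⟨k, hk⟩ := Finite.exists_max hM.eigenvalues
  set b := hM.eigenvectorBasis
  have parseval (x y : ι → ℝ) : x ⬝ᵥ y = ∑ i, (b i ⬝ᵥ x) * (b i ⬝ᵥ y) := by
    simpa only [inner_eq_star_dotProduct, star_trivial, dotProduct_comm y]
      using (b.sum_inner_mul_inner (toLp 2 x) (toLp 2 y)).symm
  have hMb (i : ι) (x : ι → ℝ) : b i ⬝ᵥ M *ᵥ x = hM.eigenvalues i * (b i ⬝ᵥ x) := by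
    rw [dotProduct_mulVec, ← mulVec_transpose, ← conjTranspose_eq_transpose_of_trivial, hM.eq,
      hM.mulVec_eigenvectorBasis, smul_dotProduct, smul_eq_mul]
  refine ⟨hM.eigenvalues k, b k, ?_, hM.mulVec_eigenvectorBasis k, fun x ↦ ?_⟩
  · simpa only [inner_eq_star_dotProduct, star_trivial, b.orthonormal.1 k,
      one_pow] using real_inner_self_eq_norm_sq (b k)
  · calc x ⬝ᵥ M *ᵥ x = ∑ i, hM.eigenvalues i * (b i ⬝ᵥ x) ^ 2 := by
          rw [parseval]
          exact Finset.sum_congr rfl fun i _ ↦ by rw [hMb]; ring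
      _ ≤ ∑ i, hM.eigenvalues k * (b i ⬝ᵥ x) ^ 2 := by
          gcongr with i; exact hk i
      _ = hM.eigenvalues k * (x ⬝ᵥ x) := by
          rw [← Finset.mul_sum, parseval x x]; simp only [sq]

section L2OpNorm

variable [DecidableEq ι]

theorem l2_opNorm_eq_sSup (M : Matrix κ ι ℝ) :
    ‖M‖ = sSup {r : ℝ | ∃ x : ι → ℝ, x ⬝ᵥ x ≤ 1 ∧ r = √(M *ᵥ x ⬝ᵥ M *ᵥ x)} := by
  rw [l2_opNorm_def, ← ContinuousLinearMap.sSup_unitClosedBall_eq_norm]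
  congr 1
  ext r
  simp only [Set.mem_image, Metric.mem_closedBall, dist_zero_right, Set.mem_ofPred_eq]
  constructor
  · rintro ⟨x, hx, rfl⟩
    refine ⟨ofLp x, ?_, ?_⟩
    · rwa [← Real.sqrt_le_one, ← norm_toLp_eq_sqrt]
    · rw [← norm_toLp_eq_sqrt]; rfl
  · rintro ⟨x, hx, rfl⟩
    refine ⟨toLp 2 x, ?_, ?_⟩
    · rwa [norm_toLp_eq_sqrt, Real.sqrt_le_one]
    · rw [← norm_toLp_eq_sqrt]; rfl

theorem mulVec_dotProduct_mulVec_le (M : Matrix κ ι ℝ) (x : ι → ℝ) :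
    M *ᵥ x ⬝ᵥ M *ᵥ x ≤ ‖M‖ ^ 2 * (x ⬝ᵥ x) := by
  rw [← norm_toLp_sq, ← norm_toLp_sq, ← mul_pow]
  gcongr
  exact l2_opNorm_mulVec M (toLp 2 x)

theorem l2_opNorm_le_of_mulVec_dotProduct_mulVec_le (M : Matrix κ ι ℝ) {c : ℝ} (hc : 0 ≤ c)
    (h : ∀ x, M *ᵥ x ⬝ᵥ M *ᵥ x ≤ c ^ 2 * (x ⬝ᵥ x)) : ‖M‖ ≤ c := by
  rw [l2_opNorm_def]
  refine ContinuousLinearMap.opNorm_le_bound _ hc fun x ↦ ?_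
  refine (pow_le_pow_iff_left₀ (norm_nonneg _) (by positivity) two_ne_zero).mp ?_
  have hx := h (ofLp x)
  rwa [← norm_toLp_sq, ← norm_toLp_sq, toLp_ofLp, ← mul_pow] at hx

theorem dotProduct_mulVec_le_l2_opNorm (M : Matrix κ ι ℝ) {x : ι → ℝ} {y : κ → ℝ}
    (hx : x ⬝ᵥ x ≤ 1) (hy : y ⬝ᵥ y ≤ 1) : y ⬝ᵥ M *ᵥ x ≤ ‖M‖ := by
  have hx' : ‖toLp 2 x‖ ≤ 1 := by rwa [norm_toLp_eq_sqrt, Real.sqrt_le_one]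
  have hy' : ‖toLp 2 y‖ ≤ 1 := by rwa [norm_toLp_eq_sqrt, Real.sqrt_le_one]
  calc y ⬝ᵥ M *ᵥ x = inner ℝ (toLp 2 (M *ᵥ x)) (toLp 2 y) := by
        rw [inner_toLp_toLp, star_trivial]
    _ ≤ ‖toLp 2 (M *ᵥ x)‖ * ‖toLp 2 y‖ := real_inner_le_norm _ _
    _ ≤ (‖M‖ * ‖toLp 2 x‖) * 1 := by
        gcongr
        exact l2_opNorm_mulVec M (toLp 2 x)
    _ ≤ ‖M‖ := by
        rw [mul_one]
        exact mul_le_of_le_one_right (norm_nonneg M) hx'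

theorem l2_opNorm_le_one_of_transpose_mul_self_eq_one {P : Matrix κ ι ℝ} (hP : Pᵀ * P = 1) :
    ‖P‖ ≤ 1 := by
  have hsq : ‖P‖ * ‖P‖ ≤ 1 := by
    rw [← l2_opNorm_conjTranspose_mul_self, conjTranspose_eq_transpose_of_trivial, hP,
      ← diagonal_one, l2_opNorm_diagonal]
    exact (pi_norm_le_iff_of_nonneg zero_le_one).mpr fun _ ↦ by simp
  nlinarith [norm_nonneg P]

theorem l2_opNorm_transpose_mul_mul_le [DecidableEq κ] {ι' κ' : Type*} [Fintype ι']
    [Fintype κ'] [DecidableEq ι'] [DecidableEq κ'] (M : Matrix κ ι ℝ) {P : Matrix ι ι' ℝ}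
    {Q : Matrix κ κ' ℝ} (hP : Pᵀ * P = 1) (hQ : Qᵀ * Q = 1) : ‖Qᵀ * M * P‖ ≤ ‖M‖ := by
  have hQ' : ‖Qᵀ‖ ≤ 1 := by
    rw [← conjTranspose_eq_transpose_of_trivial, l2_opNorm_conjTranspose]
    exact l2_opNorm_le_one_of_transpose_mul_self_eq_one hQ
  calc ‖Qᵀ * M * P‖ ≤ ‖Qᵀ‖ * ‖M‖ * ‖P‖ :=
        (l2_opNorm_mul _ _).trans (by gcongr; exact l2_opNorm_mul _ _)
    _ ≤ 1 * ‖M‖ * 1 := by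
        gcongr
        exact l2_opNorm_le_one_of_transpose_mul_self_eq_one hP
    _ = ‖M‖ := by ring

theorem exists_singular_vectors [DecidableEq κ] (W : Matrix κ ι ℝ) (hW : 0 < ‖W‖) :
    ∃ (v : ι → ℝ) (u : κ → ℝ), v ⬝ᵥ v = 1 ∧ u ⬝ᵥ u = 1 ∧
      W *ᵥ v = ‖W‖ • u ∧ Wᵀ *ᵥ u = ‖W‖ • v := by
  obtain _ | _ := isEmpty_or_nonempty ι
  · simp [Subsingleton.elim W 0] at hW
  have hgram (x : ι → ℝ) : W *ᵥ x ⬝ᵥ W *ᵥ x = x ⬝ᵥ (Wᵀ * W) *ᵥ x := by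
    rw [← mulVec_mulVec, dotProduct_mulVec x, vecMul_transpose]
  obtain ⟨μ, v, hv, hWWv, hμ⟩ :=
    (isHermitian_conjTranspose_mul_self W).exists_eigenvector_dotProduct_mulVec_le
  rw [conjTranspose_eq_transpose_of_trivial] at hWWv hμ
  have hWv : W *ᵥ v ⬝ᵥ W *ᵥ v = μ := by
    rw [hgram, hWWv, dotProduct_smul, hv, smul_eq_mul, mul_one]
  have hnorm : ‖W‖ ^ 2 = μ := by
    refine le_antisymm ?_ (by simpa [hWv, hv] using mulVec_dotProduct_mulVec_le W v)
    have hμ0 : 0 ≤ μ := hWv ▸ dotProduct_self_star_nonneg _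
    have hle : ‖W‖ ≤ √μ := l2_opNorm_le_of_mulVec_dotProduct_mulVec_le W (Real.sqrt_nonneg μ)
      fun x ↦ by rw [Real.sq_sqrt hμ0, hgram]; exact hμ x
    calc ‖W‖ ^ 2 ≤ √μ ^ 2 := by gcongr
      _ = μ := Real.sq_sqrt hμ0
  set s := ‖W‖
  refine ⟨v, s⁻¹ • W *ᵥ v, hv, ?_, ?_, ?_⟩
  · rw [dotProduct_smul, smul_dotProduct, hWv, ← hnorm, smul_eq_mul, smul_eq_mul]
    field_simp
  · rw [smul_smul, mul_inv_cancel₀ hW.ne', one_smul]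
  · rw [mulVec_smul, mulVec_mulVec, hWWv, smul_smul, ← hnorm]
    congr 1
    field_simp

theorem l2_opNorm_mul_sub_le [DecidableEq κ] (W : Matrix κ ι ℝ) {a : κ → ℝ} {b : ι → ℝ}
    {α β : ℝ} (ha : ∀ j, α ≤ a j) (hb : ∀ i, b i ≤ β) :
    ‖W‖ * (α - β) ≤ ‖diagonal a * W - W * diagonal b‖ := by
  rcases (norm_nonneg W).eq_or_lt with hW | hW
  · rw [← hW, zero_mul]
    exact norm_nonneg _
  obtain ⟨v, u, hv, hu, hWv, hWu⟩ := exists_singular_vectors W hW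
  have hα : α ≤ u ⬝ᵥ diagonal a *ᵥ u := by
    rw [dotProduct_diagonal_mulVec_self, ← mul_one α, ← hu, dotProduct, Finset.mul_sum]
    exact Finset.sum_le_sum fun j _ ↦ by rw [← sq]; gcongr; exact ha j
  have hβ : v ⬝ᵥ diagonal b *ᵥ v ≤ β := by
    rw [dotProduct_diagonal_mulVec_self, ← mul_one β, ← hv, dotProduct, Finset.mul_sum]
    exact Finset.sum_le_sum fun i _ ↦ by rw [← sq]; gcongr; exact hb i
  calc ‖W‖ * (α - β) ≤ ‖W‖ * (u ⬝ᵥ diagonal a *ᵥ u - v ⬝ᵥ diagonal b *ᵥ v) := by gcongr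
    _ = u ⬝ᵥ (diagonal a * W - W * diagonal b) *ᵥ v := by
        rw [sub_mulVec, dotProduct_sub, ← mulVec_mulVec, ← mulVec_mulVec,
          dotProduct_mulVec u W, ← mulVec_transpose, hWv, hWu, mulVec_smul, dotProduct_smul,
          smul_dotProduct, smul_eq_mul, smul_eq_mul, mul_sub]
    _ ≤ _ := dotProduct_mulVec_le_l2_opNorm _ hv.le hu.le

end L2OpNorm

end Matrix

theorem specNorm_eq_l2_opNorm {m n : ℕ} (M : Matrix (Fin m) (Fin n) ℝ) : specNorm M = ‖M‖ := by
  simp only [specNorm, l2_opNorm_eq_sSup, dotProduct, sq]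

/-- Spectral-norm claim of the perturbation lemma (Lemma 3 of the paper):
for symmetric `A` and `Ã = A + E` with ordered eigenvalues and orthonormal
eigenvector bases, `‖Ũ₂ᵀU₁‖₂ ≤ σ_max(E) / (λ̃_{ρ+1} − λ_ρ)`. -/
theorem perturbation_lemma_spectral
    (n ρ : ℕ) (hρn : ρ < n)
    (A E : Matrix (Fin n) (Fin n) ℝ) (hA : A.IsSymm) (hE : E.IsSymm)
    -- eigenvalues and orthonormal eigenvectors of A, in increasing order
    (lam : Fin n → ℝ) (u : Fin n → Fin n → ℝ)
    (hlamMono : Monotone lam)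
    (huOrtho : ∀ i j, ∑ x, u i x * u j x = if i = j then (1 : ℝ) else 0)
    (huEig : ∀ j, A.mulVec (u j) = lam j • u j)
    -- eigenvalues and orthonormal eigenvectors of Ã = A + E, in increasing order
    (tlam : Fin n → ℝ) (tu : Fin n → Fin n → ℝ)
    (htlamMono : Monotone tlam)
    (htuOrtho : ∀ i j, ∑ x, tu i x * tu j x = if i = j then (1 : ℝ) else 0)
    (htuEig : ∀ j, (A + E).mulVec (tu j) = tlam j • tu j)
    -- eigengap assumption: λ̃_{ρ+1} > λ_ρ  (1-indexed; 0-indexed below)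
    (hgap : lam ⟨ρ - 1, by omega⟩ < tlam ⟨ρ, hρn⟩)
    -- U₁ = [u₁ ⋯ u_ρ] and Ũ₂ = [ũ_{ρ+1} ⋯ ũ_n]
    (U₁ : Matrix (Fin n) (Fin ρ) ℝ)
    (hU₁ : ∀ x j, U₁ x j = u (Fin.castLE hρn.le j) x)
    (tU₂ : Matrix (Fin n) (Fin (n - ρ)) ℝ)
    (htU₂ : ∀ (x : Fin n) (j : Fin (n - ρ)), tU₂ x j = tu ⟨ρ + j.1, by omega⟩ x) :
    specNorm (tU₂ᵀ * U₁) ≤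
      specNorm E / (tlam ⟨ρ, hρn⟩ - lam ⟨ρ - 1, by omega⟩) := by
  have hU₁ortho : U₁ᵀ * U₁ = 1 := transpose_mul_self_eq_one_of_orthonormal hU₁
    fun i j ↦ by simp only [huOrtho, (Fin.castLE_injective hρn.le).eq_iff]
  have htU₂ortho : tU₂ᵀ * tU₂ = 1 := transpose_mul_self_eq_one_of_orthonormal htU₂
    fun i j ↦ by simp [htuOrtho, Fin.ext_iff]
  have hgapW : ‖tU₂ᵀ * U₁‖ * (tlam ⟨ρ, hρn⟩ - lam ⟨ρ - 1, by omega⟩) ≤ ‖tU₂ᵀ * E * U₁‖ := by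
    rw [← add_sub_cancel_left A E, ← diagonal_mul_sub_mul_diagonal_eq (hA.add hE)
      (mul_eq_mul_diagonal_of_mulVec_eq_smul hU₁ fun j ↦ huEig _)
      (mul_eq_mul_diagonal_of_mulVec_eq_smul htU₂ fun j ↦ htuEig _)]
    refine l2_opNorm_mul_sub_le _ (fun j ↦ htlamMono ?_) (fun i ↦ hlamMono ?_)
    · simp [Fin.le_def]
    · simp only [Fin.le_def, Fin.val_castLE]; omega
  rw [specNorm_eq_l2_opNorm, specNorm_eq_l2_opNorm, le_div_iff₀ (sub_pos.2 hgap)]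
  exact hgapW.trans (l2_opNorm_transpose_mul_mul_le E hU₁ortho htU₂ortho)
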